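/- arXiv:1908.03501 — 3 statements merged into one kernel-verified Lean document; each statement's English description precedes it below -/
import Mathlib

section
/- Let ≤₁ and ≤₂ be transitive relations on a finite nonempty set S, and let ≤₃ be their intersection: s ≤₃ t iff (s ≤₁ t and s ≤₂ t). Then ≤₃ is transitive and mcl(≤₃) ≤ mcl(≤₁) + mcl(≤₂). -/
/-- There exists a chain `s₀ < s₁ < ... < s_l` for the strict part of `r`. -/
def hasChain {S : Type*} (r : S → S → Prop) (l : ℕ) : Prop :=
  ∃ s : ℕ → S, ∀ i < l, r (s i) (s (i + 1)) ∧ ¬ r (s (i + 1)) (s i)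

/-- The maximum chain length of a relation. -/
noncomputable def mcl {S : Type*} (r : S → S → Prop) : ℕ :=
  sSup {l | hasChain r l}

section aux

variable {S : Type*}

lemma chain_forward {r : S → S → Prop} (hr : Transitive r) {s : ℕ → S} {l : ℕ}
    (hs : ∀ i < l, r (s i) (s (i + 1)) ∧ ¬ r (s (i + 1)) (s i)) :
    ∀ i j, i < j → j ≤ l → r (s i) (s j) := by
  intro i j hij hjl
  induction j with
  | zero => omega
  | succ j ih =>
    rcases Nat.lt_succ_iff_lt_or_eq.mp hij with h | h
    · exact hr (ih h (by omega)) (hs j (by omega)).1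
    · subst h; exact (hs i (by omega)).1

lemma chain_strict {r : S → S → Prop} (hr : Transitive r) {s : ℕ → S} {l : ℕ}
    (hs : ∀ i < l, r (s i) (s (i + 1)) ∧ ¬ r (s (i + 1)) (s i)) :
    ∀ i j, i < j → j ≤ l → ¬ r (s j) (s i) := by
  intro i j hij hjl hback
  have h1 : r (s (i + 1)) (s i) := by
    rcases eq_or_lt_of_le (Nat.succ_le_of_lt hij) with h | h
    · subst h; exact hback
    · exact hr (chain_forward hr hs (i + 1) j h hjl) hback
  exact (hs i (by omega)).2 h1

lemma bdd_chain [Fintype S] {r : S → S → Prop} (hr : Transitive r) :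
    BddAbove {l | hasChain r l} := by
  refine ⟨Fintype.card S, fun l hl => ?_⟩
  obtain ⟨s, hs⟩ := hl
  have hinj : Function.Injective (fun i : Fin (l + 1) => s i) := by
    intro a b hab
    by_contra hne
    rcases lt_trichotomy (a : ℕ) (b : ℕ) with h | h | h
    · have hf := chain_forward hr hs a b h (by omega)
      have hst := chain_strict hr hs a b h (by omega)
      rw [show s a = s b from hab] at hf hst
      exact hst hf
    · exact hne (Fin.ext h)
    · have hf := chain_forward hr hs b a h (by omega)
      have hst := chain_strict hr hs b a h (by omega)
      rw [show s a = s b from hab] at hf hst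
      exact hst hf
  have := Fintype.card_le_of_injective _ hinj
  simp at this
  omega

lemma le_mcl [Fintype S] {r : S → S → Prop} (hr : Transitive r) {l : ℕ}
    (hl : hasChain r l) : l ≤ mcl r :=
  le_csSup (bdd_chain hr) hl

lemma key {le₁ le₂ : S → S → Prop} (h₁ : Transitive le₁) (h₂ : Transitive le₂) :
    ∀ l (s : ℕ → S),
      (∀ i < l, (le₁ (s i) (s (i + 1)) ∧ le₂ (s i) (s (i + 1))) ∧
        ¬ (le₁ (s (i + 1)) (s i) ∧ le₂ (s (i + 1)) (s i))) →
      ∃ k₁ k₂ : ℕ, ∃ c₁ c₂ : ℕ → S, l ≤ k₁ + k₂ ∧ c₁ 0 = s 0 ∧ c₂ 0 = s 0 ∧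
        (∀ i < k₁, le₁ (c₁ i) (c₁ (i + 1)) ∧ ¬ le₁ (c₁ (i + 1)) (c₁ i)) ∧
        (∀ i < k₂, le₂ (c₂ i) (c₂ (i + 1)) ∧ ¬ le₂ (c₂ (i + 1)) (c₂ i)) := by
  intro l
  induction l with
  | zero =>
    intro s _
    exact ⟨0, 0, s, s, by omega, rfl, rfl, by omega, by omega⟩
  | succ l ih =>
    intro s hs
    obtain ⟨k₁, k₂, c₁, c₂, hk, hc10, hc20, hch1, hch2⟩ :=
      ih (fun i => s (i + 1)) (fun i hi => hs (i + 1) (by omega))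
    have step0 := hs 0 (by omega)
    rcases not_and_or.mp step0.2 with hn | hn
    · -- first step strict in le₁ : prepend to c₁, replace head of c₂
      refine ⟨k₁ + 1, k₂, fun i => if i = 0 then s 0 else c₁ (i - 1),
        fun i => if i = 0 then s 0 else c₂ i, by omega, by simp, by simp, ?_, ?_⟩
      · intro i hi
        match i with
        | 0 =>
          simp only [if_pos rfl, if_neg one_ne_zero]
          constructor
          · rw [hc10]; exact step0.1.1
          · rw [hc10]; exact hn
        | (j + 1) =>
          simp only [if_neg (Nat.succ_ne_zero j), if_neg (Nat.succ_ne_zero (j + 1))]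
          simpa using hch1 j (by omega)
      · intro i hi
        match i with
        | 0 =>
          simp only [if_pos rfl, if_neg one_ne_zero]
          have h01 := hch2 0 hi
          rw [hc20] at h01
          constructor
          · exact h₂ step0.1.2 h01.1
          · intro hb
            exact h01.2 (h₂ hb step0.1.2)
        | (j + 1) =>
          simp only [if_neg (Nat.succ_ne_zero j), if_neg (Nat.succ_ne_zero (j + 1))]
          exact hch2 (j + 1) hi
    · -- first step strict in le₂ : prepend to c₂, replace head of c₁
      refine ⟨k₁, k₂ + 1, fun i => if i = 0 then s 0 else c₁ i,
        fun i => if i = 0 then s 0 else c₂ (i - 1), by omega, by simp, by simp, ?_, ?_⟩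
      · intro i hi
        match i with
        | 0 =>
          simp only [if_pos rfl, if_neg one_ne_zero]
          have h01 := hch1 0 hi
          rw [hc10] at h01
          constructor
          · exact h₁ step0.1.1 h01.1
          · intro hb
            exact h01.2 (h₁ hb step0.1.1)
        | (j + 1) =>
          simp only [if_neg (Nat.succ_ne_zero j), if_neg (Nat.succ_ne_zero (j + 1))]
          exact hch1 (j + 1) hi
      · intro i hi
        match i with
        | 0 =>
          simp only [if_pos rfl, if_neg one_ne_zero]
          constructor
          · rw [hc20]; exact step0.1.2
          · rw [hc20]; exact hn
        | (j + 1) =>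
          simp only [if_neg (Nat.succ_ne_zero j), if_neg (Nat.succ_ne_zero (j + 1))]
          simpa using hch2 j (by omega)

end aux

theorem stmt_6 {S : Type*} [Fintype S] [Nonempty S] (le₁ le₂ : S → S → Prop)
    (h₁ : Transitive le₁) (h₂ : Transitive le₂) :
    Transitive (fun s t => le₁ s t ∧ le₂ s t) ∧
      mcl (fun s t => le₁ s t ∧ le₂ s t) ≤ mcl le₁ + mcl le₂ := by
  constructor
  · intro a b c hab hbc
    exact ⟨h₁ hab.1 hbc.1, h₂ hab.2 hbc.2⟩
  · unfold mcl
    refine csSup_le ⟨0, ?_⟩ ?_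
    · exact ⟨fun _ => Classical.arbitrary S, by omega⟩
    · intro l hl
      obtain ⟨s, hs⟩ := hl
      obtain ⟨k₁, k₂, c₁, c₂, hk, _, _, hch1, hch2⟩ := key h₁ h₂ l s hs
      calc l ≤ k₁ + k₂ := hk
        _ ≤ mcl le₁ + mcl le₂ :=
          add_le_add (le_mcl h₁ ⟨c₁, hch1⟩) (le_mcl h₂ ⟨c₂, hch2⟩)
end

section
/- Let ≤ be a transitive relation on a finite nonempty set S, with strict part < and equivalence ≡ defined by s ≡ t iff (s = t or (s ≤ t and t ≤ s)). Define ≤' on P(S) by A ≤' B iff ∀b ∈ B ∃a ∈ A with a ≤ b, with strict part <'. Then the maximum chain length of ≤' satisfies mcl(≤') ≤ 2·|S_≡| ≤ 2·|S|, where S_≡ is the set of ≡-equivalence classes. In particular, any chain A⁰ <' A¹ <' ... <' Aˡ of subsets of S has l ≤ 2·|S_≡|. -/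
section Aux

variable {S : Type*} [Fintype S] (le : S → S → Prop)

/-- upward closure -/
def upS (A : Set S) : Set S := {s | ∃ a ∈ A, le a s}

def clS (A : Set S) : Set S := A ∪ upS le A

def clsS (w : S) : Set S := {v | w = v ∨ (le w v ∧ le v w)}

def classSet (U : Set S) : Set (Set S) := {q | (∃ w, q = clsS le w) ∧ q ⊆ U}

noncomputable def muS (A : Set S) : ℕ :=
  (classSet le (clS le A)).ncard + (classSet le (upS le A)).ncard

variable (hle : Transitive le)
include hle

lemma upS_subset {A B : Set S} (h : ∀ b ∈ B, ∃ a ∈ A, le a b) :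
    upS le B ⊆ upS le A := by
  rintro s ⟨b, hb, hbs⟩
  obtain ⟨a, ha, hab⟩ := h b hb
  exact ⟨a, ha, hle hab hbs⟩

lemma clS_subset {A B : Set S} (h : ∀ b ∈ B, ∃ a ∈ A, le a b) :
    clS le B ⊆ clS le A := by
  rintro s (hs | hs)
  · exact Or.inr (h s hs)
  · exact Or.inr (upS_subset le hle h hs)

lemma upS_closed {A : Set S} {s t : S} (hs : s ∈ upS le A) (hst : le s t) :
    t ∈ upS le A := by
  obtain ⟨a, ha, has⟩ := hs
  exact ⟨a, ha, hle has hst⟩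

lemma clS_closed {A : Set S} {s t : S} (hs : s ∈ clS le A) (hst : le s t) :
    t ∈ clS le A := by
  rcases hs with hs | hs
  · exact Or.inr ⟨s, hs, hst⟩
  · exact Or.inr (upS_closed le hle hs hst)

omit hle in
lemma classSet_mono {U V : Set S} (h : U ⊆ V) : classSet le U ⊆ classSet le V :=
  fun q ⟨hq, hqU⟩ => ⟨hq, hqU.trans h⟩

omit hle in
lemma classSet_ssubset {U V : Set S} (h : U ⊂ V)
    (hV : ∀ ⦃s t : S⦄, s ∈ V → le s t → t ∈ V) :
    classSet le U ⊂ classSet le V := by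
  obtain ⟨hUV, hne⟩ := h
  obtain ⟨s, hsV, hsU⟩ := Set.not_subset.mp hne
  refine ⟨classSet_mono le hUV, Set.not_subset.mpr ⟨clsS le s, ⟨⟨s, rfl⟩, ?_⟩, ?_⟩⟩
  · rintro v (rfl | ⟨h1, h2⟩)
    · exact hsV
    · exact hV hsV h1
  · intro hmem
    exact hsU (hmem.2 (Or.inl rfl))

omit hle in
lemma classSet_finite (U : Set S) : (classSet le U).Finite := Set.toFinite _

/-- one strict step strictly decreases the measure -/
lemma muS_lt {A B : Set S} (h1 : ∀ b ∈ B, ∃ a ∈ A, le a b)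
    (h2 : ¬ ∀ a ∈ A, ∃ b ∈ B, le b a) : muS le B < muS le A := by
  have hup : upS le B ⊆ upS le A := upS_subset le hle h1
  have hcl : clS le B ⊆ clS le A := clS_subset le hle h1
  obtain ⟨a, ha, hab⟩ : ∃ a ∈ A, a ∉ upS le B := by
    push_neg at h2
    obtain ⟨a, ha, h⟩ := h2
    exact ⟨a, ha, fun ⟨b, hb, hba⟩ => h b hb hba⟩
  by_cases hequp : upS le A ⊆ upS le B
  · -- then cl must strictly shrink
    have hclstrict : clS le B ⊂ clS le A := by
      refine ⟨hcl, fun hsub => ?_⟩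
      have haB : a ∈ clS le B := hsub (Or.inl ha)
      rcases haB with haB | haB
      · obtain ⟨a', ha', haa⟩ := h1 a haB
        exact hab (hequp ⟨a', ha', haa⟩)
      · exact hab haB
    have h3 := classSet_ssubset le hclstrict (fun s t hs => clS_closed le hle hs)
    have h4 : (classSet le (upS le B)).ncard ≤ (classSet le (upS le A)).ncard :=
      Set.ncard_le_ncard (classSet_mono le hup) (classSet_finite le _)
    have h5 : (classSet le (clS le B)).ncard < (classSet le (clS le A)).ncard :=
      Set.ncard_lt_ncard h3 (classSet_finite le _)
    unfold muS; omega
  · have hupstrict : upS le B ⊂ upS le A :=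
      ⟨hup, fun hsub => hequp hsub⟩
    have h3 := classSet_ssubset le hupstrict (fun s t hs => upS_closed le hle hs)
    have h4 : (classSet le (clS le B)).ncard ≤ (classSet le (clS le A)).ncard :=
      Set.ncard_le_ncard (classSet_mono le hcl) (classSet_finite le _)
    have h5 : (classSet le (upS le B)).ncard < (classSet le (upS le A)).ncard :=
      Set.ncard_lt_ncard h3 (classSet_finite le _)
    unfold muS; omega

omit hle in
lemma muS_le (A : Set S) :
    muS le A ≤ 2 * Nat.card {q : Set S // ∃ w : S, q = {v | w = v ∨ (le w v ∧ le v w)}} := by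
  have hcard : Nat.card {q : Set S // ∃ w : S, q = {v | w = v ∨ (le w v ∧ le v w)}}
      = ({q : Set S | ∃ w, q = clsS le w}).ncard := by
    rw [← Nat.card_coe_set_eq]
    rfl
  have h1 : ∀ U : Set S, (classSet le U).ncard ≤ ({q : Set S | ∃ w, q = clsS le w}).ncard := by
    intro U
    exact Set.ncard_le_ncard (fun q hq => hq.1) (Set.toFinite _)
  rw [hcard]
  have := h1 (clS le A)
  have := h1 (upS le A)
  unfold muS; omega

end Aux

theorem stmt_12 {S : Type*} [Fintype S] [Nonempty S] (le : S → S → Prop)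
    (hle : Transitive le) :
    -- the number of equivalence classes of ≡
    mcl (fun A B : Set S => ∀ b ∈ B, ∃ a ∈ A, le a b) ≤
        2 * Nat.card {q : Set S // ∃ w : S, q = {v | w = v ∨ (le w v ∧ le v w)}} ∧
      2 * Nat.card {q : Set S // ∃ w : S, q = {v | w = v ∨ (le w v ∧ le v w)}} ≤
        2 * Nat.card S ∧
      ∀ (l : ℕ) (A : ℕ → Set S),
        (∀ i < l, (∀ b ∈ A (i + 1), ∃ a ∈ A i, le a b) ∧
          ¬ (∀ b ∈ A i, ∃ a ∈ A (i + 1), le a b)) →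
        l ≤ 2 * Nat.card {q : Set S // ∃ w : S, q = {v | w = v ∨ (le w v ∧ le v w)}} := by
  set k := Nat.card {q : Set S // ∃ w : S, q = {v | w = v ∨ (le w v ∧ le v w)}} with hk
  have key : ∀ (l : ℕ) (A : ℕ → Set S),
      (∀ i < l, (∀ b ∈ A (i + 1), ∃ a ∈ A i, le a b) ∧
        ¬ (∀ b ∈ A i, ∃ a ∈ A (i + 1), le a b)) → l ≤ 2 * k := by
    intro l A hA
    have hstep : ∀ i < l, muS le (A (i + 1)) < muS le (A i) := by
      intro i hi
      exact muS_lt le hle (hA i hi).1 (hA i hi).2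
    have hdec : ∀ i ≤ l, i + muS le (A i) ≤ muS le (A 0) := by
      intro i hi
      induction i with
      | zero => omega
      | succ n ih =>
        have h1 := hstep n (by omega)
        have h2 := ih (by omega)
        omega
    have := hdec l le_rfl
    have := muS_le le (A 0)
    omega
  refine ⟨?_, ?_, key⟩
  · -- mcl bound
    apply csSup_le
    · exact ⟨0, fun _ => ∅, fun i hi => absurd hi (Nat.not_lt_zero i)⟩
    · rintro l ⟨A, hA⟩
      exact key l A hA
  · -- k ≤ Nat.card S
    have hsurj : Function.Surjective
        (fun w : S => (⟨{v | w = v ∨ (le w v ∧ le v w)}, w, rfl⟩ :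
          {q : Set S // ∃ w : S, q = {v | w = v ∨ (le w v ∧ le v w)}})) := by
      rintro ⟨q, w, rfl⟩
      exact ⟨w, rfl⟩
    have := Nat.card_le_card_of_surjective _ hsurj
    omega
end

section
/- Let ≤ be a transitive relation on a finite nonempty set S with lifted relation ≤' on P(S). Let A, B, C ⊆ S with A ≤' B and B ≤' C. If q is an ≡-equivalence class with q ∈ A_min,≡ and q ∉ B_min,≡, then q ∉ C_min,≡. (Once a class leaves the set of minimal classes along a ≤'-chain, it never re-enters.) -/
/-- The set of minimal elements of `A` with respect to the strict part of `le`. -/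
def setMin {S : Type*} (le : S → S → Prop) (A : Set S) : Set S :=
  {a ∈ A | ¬ ∃ b ∈ A, le b a ∧ ¬ le a b}

/-- The set of equivalence classes (w.r.t. `s ≡ t ↔ s = t ∨ (s ≤ t ∧ t ≤ s)`)
of the minimal elements of `A`. -/
def setMinClasses {S : Type*} (le : S → S → Prop) (A : Set S) : Set (Set S) :=
  {q | ∃ a ∈ setMin le A, q = {v | a = v ∨ (le a v ∧ le v a)}}

theorem stmt_14 {S : Type*} [Fintype S] [Nonempty S] (le : S → S → Prop)
    (hle : Transitive le) (A B C : Set S)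
    (hAB : ∀ b ∈ B, ∃ a ∈ A, le a b) (hBC : ∀ c ∈ C, ∃ b ∈ B, le b c)
    (q : Set S) (hqA : q ∈ setMinClasses le A) (hqB : q ∉ setMinClasses le B) :
    q ∉ setMinClasses le C := by
  obtain ⟨a, ⟨haA, hamin⟩, rfl⟩ := hqA
  rintro ⟨c, ⟨hcC, _⟩, hq⟩
  -- a is in its own class, hence in the class of c
  have hac : c = a ∨ (le c a ∧ le a c) := by
    have : a ∈ {v | a = v ∨ (le a v ∧ le v a)} := Or.inl rfl
    rw [hq] at this
    exact this
  obtain ⟨b, hbB, hbc⟩ := hBC c hcC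
  have hba : le b a := by
    rcases hac with h | h
    · rw [h] at hbc; exact hbc
    · exact hle hbc h.1
  obtain ⟨a', ha'A, ha'b⟩ := hAB b hbB
  have haa' : le a a' := by
    by_contra h
    exact hamin ⟨a', ha'A, hle ha'b hba, h⟩
  have hab : le a b := hle haa' ha'b
  refine hqB ⟨b, ⟨hbB, ?_⟩, ?_⟩
  · rintro ⟨b', hb'B, hb'b, hnbb'⟩
    obtain ⟨a'', ha''A, ha''b'⟩ := hAB b' hb'B
    have ha''a : le a'' a := hle ha''b' (hle hb'b hba)
    have haa'' : le a a'' := by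
      by_contra h
      exact hamin ⟨a'', ha''A, ha''a, h⟩
    exact hnbb' (hle hba (hle haa'' ha''b'))
  · ext v
    simp only [Set.mem_setOf_eq]
    constructor
    · rintro (rfl | ⟨h1, h2⟩)
      · exact Or.inr ⟨hba, hab⟩
      · exact Or.inr ⟨hle hba h1, hle h2 hab⟩
    · rintro (rfl | ⟨h1, h2⟩)
      · exact Or.inr ⟨hab, hba⟩
      · exact Or.inr ⟨hle hab h1, hle h2 hba⟩
end
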